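/- If the interaction energy is a constant J on every edge and every magnetic field vector is M_i = k_i·B for a fixed vector B ∈ ℂ^q and positive integers k_i, then Z(G) = (e^{βJ} − 1)^{|V(G)|} · W(G, ω; {x_k}_{k∈ℤ⁺}, e^{βJ}), where the vertex weight of v_i is the integer k_i and x_k = (Σ_{α=1}^q e^{β k B_α}) / (e^{βJ} − 1). -/

import Mathlib

open Finset

structure WGraph (S : Type) (L : Type) where
  V : Type
  E : Type
  [fV : Fintype V]
  [dV : DecidableEq V]
  [fE : Fintype E]
  [dE : DecidableEq E]
  ends : E → V × V
  ω : V → S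
  γ : E → L

attribute [instance] WGraph.fV WGraph.dV WGraph.fE WGraph.dE

namespace WGraph
variable {S L : Type}

def IsLoop (G : WGraph S L) (e : G.E) : Prop := (G.ends e).1 = (G.ends e).2

def delete (G : WGraph S L) (e₀ : G.E) : WGraph S L where
  V := G.V
  E := {e : G.E // e ≠ e₀}
  ends := fun e => G.ends e.1
  ω := G.ω
  γ := fun e => G.γ e.1

def contract [Add S] (G : WGraph S L) (e₀ : G.E) (h : ¬ G.IsLoop e₀) : WGraph S L where
  V := {v : G.V // v ≠ (G.ends e₀).2}
  E := {e : G.E // e ≠ e₀}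
  ends := fun e =>
    ((if hv : (G.ends e.1).1 = (G.ends e₀).2 then ⟨(G.ends e₀).1, h⟩
        else ⟨(G.ends e.1).1, hv⟩ : {v : G.V // v ≠ (G.ends e₀).2}),
     (if hv : (G.ends e.1).2 = (G.ends e₀).2 then ⟨(G.ends e₀).1, h⟩
        else ⟨(G.ends e.1).2, hv⟩))
  ω := fun v =>
    if v.1 = (G.ends e₀).1 then G.ω (G.ends e₀).1 + G.ω (G.ends e₀).2 else G.ω v.1
  γ := fun e => G.γ e.1

def mapEdges {L' : Type} (G : WGraph S L) (φ : L → L') : WGraph S L' where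
  V := G.V
  E := G.E
  ends := G.ends
  ω := G.ω
  γ := φ ∘ G.γ

def stateGraph (G : WGraph S L) (A : Finset G.E) : SimpleGraph G.V :=
  SimpleGraph.fromRel (fun v w => ∃ e ∈ A, G.ends e = (v, w))

noncomputable instance (G : WGraph S L) (A : Finset G.E) :
    Fintype (G.stateGraph A).ConnectedComponent := Fintype.ofFinite _

noncomputable def kcomp (G : WGraph S L) (A : Finset G.E) : ℕ :=
  Fintype.card (G.stateGraph A).ConnectedComponent

open scoped Classical in
noncomputable def compWeight [AddCommMonoid S] (G : WGraph S L) (A : Finset G.E)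
    (c : (G.stateGraph A).ConnectedComponent) : S :=
  ∑ v ∈ Finset.univ.filter (fun v => (G.stateGraph A).connectedComponentMk v = c), G.ω v

end WGraph

/-! With `y = e^{βJ}`, the Boltzmann weight of a colouring `σ` is
`∏_e (y if e is monochromatic else 1) · ∏_v e^{β ω_v B_{σ v}}`. Writing the factor of a non-loop
edge `e` as `1 + (y - 1)·[σ agrees on the ends of e]` gives `Z(G) = Z(G - e) + (y - 1) Z(G / e)`:
colourings agreeing on the ends of `e` are the colourings of `G / e`, and `k ↦ e^{β k B_α}` turns
the addition of merged vertex weights into multiplication. A loop contributes the factor `y`, and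
an edgeless graph gives `∏_v Σ_α e^{β ω_v B_α}`. So `Z / (y - 1)^{|V|}` obeys the recursion defining
`W` with `x_k = Σ_α e^{β k B_α} / (y - 1)`, and induction on the number of edges concludes. -/

namespace WGraph

variable {S L Q R : Type}

theorem induction_deleteContract [Add S] {P : WGraph S L → Prop}
    (empty : ∀ G : WGraph S L, IsEmpty G.E → P G)
    (loop : ∀ (G : WGraph S L) (e : G.E), G.IsLoop e → P (G.delete e) → P G)
    (nonloop : ∀ (G : WGraph S L) (e : G.E) (h : ¬ G.IsLoop e),
      P (G.delete e) → P (G.contract e h) → P G)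
    (G : WGraph S L) : P G := by
  induction hn : Fintype.card G.E using Nat.strong_induction_on generalizing G with
  | _ n ih =>
    rcases isEmpty_or_nonempty G.E with hE | ⟨⟨e⟩⟩
    · exact empty G hE
    have hlt : Fintype.card {e' : G.E // e' ≠ e} < n :=
      hn ▸ Fintype.card_subtype_lt (x := e) (by simp)
    by_cases h : G.IsLoop e
    · exact loop G e h (ih _ hlt _ rfl)
    · exact nonloop G e h (ih _ hlt _ rfl) (ih _ hlt _ rfl)

theorem card_V_delete (G : WGraph S L) (e : G.E) :
    Fintype.card (G.delete e).V = Fintype.card G.V :=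
  rfl

section Contract

variable [Add S] (G : WGraph S L) {e₀ : G.E} (h : ¬ G.IsLoop e₀)

theorem card_V_contract_add_one : Fintype.card (G.contract e₀ h).V + 1 = Fintype.card G.V := by
  have : 0 < Fintype.card G.V := Fintype.card_pos_iff.mpr ⟨(G.ends e₀).2⟩
  change Fintype.card {v : G.V // v ≠ (G.ends e₀).2} + 1 = _
  rw [Fintype.card_subtype_compl, Fintype.card_subtype_eq]
  omega

def colouringEquivContract :
    {σ : G.V → Q // σ (G.ends e₀).1 = σ (G.ends e₀).2} ≃ ((G.contract e₀ h).V → Q) where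
  toFun σ v := σ.1 v.1
  invFun τ := ⟨fun v => if hv : v = (G.ends e₀).2 then τ ⟨(G.ends e₀).1, h⟩ else τ ⟨v, hv⟩,
    by simp⟩
  left_inv σ := by
    ext v
    by_cases hv : v = (G.ends e₀).2
    · subst hv; simpa using σ.2
    · simp [hv]
  right_inv τ := by
    funext v
    exact dif_neg v.2

variable {G}

theorem apply_contract_ends {σ : G.V → Q} (hσ : σ (G.ends e₀).1 = σ (G.ends e₀).2)
    (e : (G.contract e₀ h).E) :
    σ ((G.contract e₀ h).ends e).1.1 = σ (G.ends e.1).1 ∧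
      σ ((G.contract e₀ h).ends e).2.1 = σ (G.ends e.1).2 := by
  have merge : ∀ v : G.V, σ (if hv : v = (G.ends e₀).2 then ⟨(G.ends e₀).1, h⟩ else ⟨v, hv⟩ :
      {v : G.V // v ≠ (G.ends e₀).2}).1 = σ v := by
    intro v
    split_ifs with hv
    · rw [hσ, hv]
    · rfl
  exact ⟨merge _, merge _⟩

theorem prod_contract_of_agree {M : Type} [CommMonoid M] {φ : S → Q → M}
    (hφ : ∀ a b α, φ (a + b) α = φ a α * φ b α) {σ : G.V → Q}
    (hσ : σ (G.ends e₀).1 = σ (G.ends e₀).2) :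
    ∏ v : (G.contract e₀ h).V, φ ((G.contract e₀ h).ω v) (σ v.1) =
      ∏ v : G.V, φ (G.ω v) (σ v) := by
  change ∏ v : {v : G.V // v ≠ (G.ends e₀).2}, φ ((G.contract e₀ h).ω v) (σ v.1) = _
  have split : ∀ v : {v : G.V // v ≠ (G.ends e₀).2}, φ ((G.contract e₀ h).ω v) (σ v.1) =
      φ (G.ω v.1) (σ v.1) *
        if v = ⟨(G.ends e₀).1, h⟩ then φ (G.ω (G.ends e₀).2) (σ (G.ends e₀).2) else 1 := by
    intro v
    by_cases hv : v = ⟨(G.ends e₀).1, h⟩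
    · subst hv
      simp [contract, hφ, hσ]
    · have : v.1 ≠ (G.ends e₀).1 := fun hc => hv (Subtype.ext hc)
      simp [contract, hv, this]
  rw [prod_congr rfl fun v _ => split v, prod_mul_distrib, prod_ite_eq', if_pos (mem_univ _),
    Fintype.prod_eq_mul_prod_subtype_ne _ (G.ends e₀).2, mul_comm]

end Contract

section Potts

variable [Fintype Q] [DecidableEq Q]

def pottsZ [CommSemiring R] (y : R) (φ : S → Q → R) (G : WGraph S L) : R :=
  ∑ σ : G.V → Q, (∏ e : G.E, if σ (G.ends e).1 = σ (G.ends e).2 then y else 1) *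
    ∏ v : G.V, φ (G.ω v) (σ v)

section Semiring

variable [CommSemiring R] (y : R) (φ : S → Q → R)

theorem pottsZ_of_isEmpty (G : WGraph S L) (hE : IsEmpty G.E) :
    G.pottsZ y φ = ∏ v : G.V, ∑ α : Q, φ (G.ω v) α := by
  simp only [pottsZ, univ_eq_empty, prod_empty, one_mul]
  rw [prod_univ_sum, Fintype.piFinset_univ]

theorem pottsZ_of_isLoop (G : WGraph S L) {e : G.E} (h : G.IsLoop e) :
    G.pottsZ y φ = y * (G.delete e).pottsZ y φ := by
  rw [pottsZ, pottsZ, mul_sum]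
  refine sum_congr rfl fun σ _ => ?_
  rw [Fintype.prod_eq_mul_prod_subtype_ne _ e, if_pos (congrArg σ h), mul_assoc]
  rfl

theorem sum_agree_eq_pottsZ_contract [Add S] (hφ : ∀ a b α, φ (a + b) α = φ a α * φ b α)
    {G : WGraph S L} {e₀ : G.E} (h : ¬ G.IsLoop e₀) :
    ∑ σ : G.V → Q with σ (G.ends e₀).1 = σ (G.ends e₀).2,
      (∏ e : {e : G.E // e ≠ e₀}, if σ (G.ends e.1).1 = σ (G.ends e.1).2 then y else 1) *
        ∏ v : G.V, φ (G.ω v) (σ v) =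
      (G.contract e₀ h).pottsZ y φ := by
  rw [sum_subtype _ (p := fun σ => σ (G.ends e₀).1 = σ (G.ends e₀).2) fun σ => by simp]
  refine Fintype.sum_equiv (G.colouringEquivContract h) _ _ fun σ => ?_
  congr 1
  · refine prod_congr rfl fun e _ => ?_
    obtain ⟨h1, h2⟩ := apply_contract_ends h σ.2 e
    simp only [colouringEquivContract, Equiv.coe_fn_mk, h1, h2]
  · exact (prod_contract_of_agree h hφ σ.2).symm

end Semiring

theorem pottsZ_eq_delete_add_contract [Add S] [CommRing R] (y : R) {φ : S → Q → R}
    (hφ : ∀ a b α, φ (a + b) α = φ a α * φ b α) (G : WGraph S L) {e₀ : G.E}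
    (h : ¬ G.IsLoop e₀) :
    G.pottsZ y φ = (G.delete e₀).pottsZ y φ + (y - 1) * (G.contract e₀ h).pottsZ y φ := by
  have delete_eq : (G.delete e₀).pottsZ y φ = ∑ σ : G.V → Q,
      (∏ e : {e : G.E // e ≠ e₀}, if σ (G.ends e.1).1 = σ (G.ends e.1).2 then y else 1) *
        ∏ v : G.V, φ (G.ω v) (σ v) := rfl
  rw [delete_eq, ← sum_agree_eq_pottsZ_contract y φ hφ h, mul_sum, sum_filter,
    ← sum_add_distrib, pottsZ]
  refine sum_congr rfl fun σ _ => ?_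
  rw [Fintype.prod_eq_mul_prod_subtype_ne _ e₀]
  split_ifs <;> ring

end Potts

end WGraph

open WGraph

theorem exp_neg_pottsHamiltonian {Q : Type} [Fintype Q] [DecidableEq Q] (β J : ℂ) (B : Q → ℂ)
    (G : WGraph ℕ+ Unit) (σ : G.V → Q) :
    Complex.exp (-β *
      (-(J * ∑ e : G.E, if σ (G.ends e).1 = σ (G.ends e).2 then (1 : ℂ) else 0)
        - ∑ v : G.V, ∑ α : Q, ((G.ω v : ℕ) : ℂ) * B α * (if α = σ v then 1 else 0))) =
      (∏ e : G.E, if σ (G.ends e).1 = σ (G.ends e).2 then Complex.exp (β * J) else 1) *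
        ∏ v : G.V, Complex.exp (β * ((G.ω v : ℕ) : ℂ) * B (σ v)) := by
  have field : ∀ v : G.V, ∑ α : Q, ((G.ω v : ℕ) : ℂ) * B α * (if α = σ v then 1 else 0) =
      ((G.ω v : ℕ) : ℂ) * B (σ v) := by
    intro v
    simp
  have exponent : -β *
      (-(J * ∑ e : G.E, if σ (G.ends e).1 = σ (G.ends e).2 then (1 : ℂ) else 0)
        - ∑ v : G.V, ∑ α : Q, ((G.ω v : ℕ) : ℂ) * B α * (if α = σ v then 1 else 0)) =
      (∑ e : G.E, β * J * if σ (G.ends e).1 = σ (G.ends e).2 then (1 : ℂ) else 0) +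
        ∑ v : G.V, β * (((G.ω v : ℕ) : ℂ) * B (σ v)) := by
    rw [sum_congr rfl fun v _ => field v, ← mul_sum, ← mul_sum]
    ring
  rw [exponent, Complex.exp_add, Complex.exp_sum, Complex.exp_sum]
  simp only [mul_ite, mul_one, mul_zero, apply_ite Complex.exp, Complex.exp_zero, mul_assoc]

theorem exp_mul_pnat_add {Q : Type} (β : ℂ) (B : Q → ℂ) (a b : ℕ+) (α : Q) :
    Complex.exp (β * ((a + b : ℕ+) : ℕ) * B α) =
      Complex.exp (β * (a : ℕ) * B α) * Complex.exp (β * (b : ℕ) * B α) := by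
  rw [← Complex.exp_add]
  push_cast
  ring_nf

/-- with constant interaction energy `J` and magnetic field vectors
`M_i = k_i·B` (`k_i ∈ ℤ⁺`, `B ∈ ℂ^q` fixed), the Potts partition function equals
`(e^{βJ}-1)^{|V(G)|} W(G,ω;{x_k},e^{βJ})` with vertex weights `ω(v_i) = k_i` and
`x_k = (Σ_α e^{βkB_α})/(e^{βJ}-1)`. -/
theorem pottsZ_integer_scaled_field_eq_W (q : ℕ) (β J : ℂ) (B : Fin q → ℂ)
    (hJ : Complex.exp (β * J) ≠ 1) (W : WGraph ℕ+ Unit → ℂ)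
    (hW1 : ∀ (G : WGraph ℕ+ Unit) (e : G.E) (h : ¬ G.IsLoop e),
      W G = W (G.delete e) + W (G.contract e h))
    (hW2 : ∀ (G : WGraph ℕ+ Unit) (e : G.E), G.IsLoop e →
      W G = Complex.exp (β * J) * W (G.delete e))
    (hW3 : ∀ G : WGraph ℕ+ Unit, IsEmpty G.E →
      W G = ∏ v : G.V,
        ((∑ α : Fin q, Complex.exp (β * ((G.ω v : ℕ) : ℂ) * B α)) /
          (Complex.exp (β * J) - 1))) :
    ∀ G : WGraph ℕ+ Unit,
      (∑ σ : G.V → Fin q, Complex.exp (-β *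
        (-(J * ∑ e : G.E, if σ (G.ends e).1 = σ (G.ends e).2 then (1 : ℂ) else 0)
          - ∑ v : G.V, ∑ α : Fin q,
              ((G.ω v : ℕ) : ℂ) * B α * (if α = σ v then 1 else 0)))) =
      (Complex.exp (β * J) - 1) ^ (Fintype.card G.V) * W G := by
  have hy : Complex.exp (β * J) - 1 ≠ 0 := sub_ne_zero.mpr hJ
  intro G
  rw [sum_congr rfl fun σ _ => exp_neg_pottsHamiltonian β J B G σ]
  change G.pottsZ (Complex.exp (β * J)) (fun (k : ℕ+) α => Complex.exp (β * (k : ℕ) * B α)) = _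
  induction G using induction_deleteContract with
  | empty G hE =>
    rw [pottsZ_of_isEmpty _ _ G hE, hW3 G hE, prod_div_distrib, prod_const, card_univ,
      mul_div_cancel₀ _ (pow_ne_zero _ hy)]
  | loop G e h ih =>
    rw [pottsZ_of_isLoop _ _ G h, ih, hW2 G e h, card_V_delete]
    ring
  | nonloop G e h ihd ihc =>
    rw [pottsZ_eq_delete_add_contract _ (exp_mul_pnat_add β B) G h, ihd, ihc, hW1 G e h,
      card_V_delete, ← card_V_contract_add_one G h]
    ring
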